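/- For every integer n ≥ 4, the (2,2) broadcast domination number of the 4×n grid graph satisfies γ_{2,2}(G_{4,n}) = 2n − ⌈(n−6)/4⌉. -/

import Mathlib

open Classical in
/-- The reception strength at vertex `u` from a set `S` of broadcasting vertices of
transmission strength `t`: the sum of `t - d(u,v)` over all `v ∈ S` with `d(u,v) < t`. -/
noncomputable def reception {V : Type*} (G : SimpleGraph V) (t : ℕ) (S : Finset V) (u : V) : ℕ∞ :=
  ∑ v ∈ S.filter (fun v => G.edist u v < (t : ℕ∞)), ((t : ℕ∞) - G.edist u v)

/-- `S` is a `(t,r)` broadcast dominating set of `G`. -/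
def IsBroadcastDominating {V : Type*} (G : SimpleGraph V) (t r : ℕ) (S : Finset V) : Prop :=
  ∀ u, (r : ℕ∞) ≤ reception G t S u

/-- The `(t,r)` broadcast domination number of a finite graph `G`. -/
noncomputable def broadcastDomNum {V : Type*} [Fintype V] (G : SimpleGraph V) (t r : ℕ) : ℕ :=
  sInf {k | ∃ S : Finset V, IsBroadcastDominating G t r S ∧ S.card = k}

/-- The `m × n` grid graph: vertices are pairs, adjacent iff at ℓ1-distance 1. -/
def gridGraph (m n : ℕ) : SimpleGraph (Fin m × Fin n) where
  Adj p q := Nat.dist p.1.val q.1.val + Nat.dist p.2.val q.2.val = 1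
  symm := by
    constructor
    intro p q h
    show Nat.dist q.1.val p.1.val + Nat.dist q.2.val p.2.val = 1
    rw [Nat.dist_comm q.1.val p.1.val, Nat.dist_comm q.2.val p.2.val]
    exact h
  loopless := by
    constructor
    intro p h
    simp only [Nat.dist_self, Nat.add_zero] at h
    exact absurd h (by norm_num)

/-!
For `t = 2` a vertex receives `2` from itself and `1` from each neighbour, so a `(2,2)` broadcast
dominating set is a set `S` such that every vertex outside `S` has at least two neighbours in `S`.
In the `4 × n` grid this is a condition on three consecutive columns, so the minimum is computed
by a min-plus recursion whose states are pairs of consecutive columns. Evaluating it gives the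
minima `8, 10, 12, 13` for `n = 4, …, 7`, and shows that once at least four columns remain, four
more columns cost exactly `7` more; the recursion propagates this to every `n`.
-/

open Finset

lemma SimpleGraph.edist_lt_two_iff {V : Type*} (G : SimpleGraph V) {u v : V} :
    G.edist u v < 2 ↔ u = v ∨ G.Adj u v := by
  rw [show (2 : ℕ∞) = 1 + 1 from rfl, ENat.lt_add_one_iff ENat.one_ne_top,
    edist_le_one_iff_adj_or_eq, or_comm]

open Classical in
lemma reception_two {V : Type*} (G : SimpleGraph V) (S : Finset V) (u : V) :
    reception G 2 S u = (if u ∈ S then 2 else 0) + #{v ∈ S | G.Adj u v} := by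
  have term (v : V) : (if G.edist u v < 2 then 2 - G.edist u v else 0) =
      (if u = v then 2 else 0) + (if G.Adj u v then 1 else 0) := by
    by_cases huv : u = v
    · subst huv; simp
    by_cases hadj : G.Adj u v
    · simp only [SimpleGraph.edist_eq_one_iff_adj.mpr hadj, if_pos hadj, if_neg huv]
      rfl
    · rw [if_neg (by rw [G.edist_lt_two_iff]; tauto), if_neg huv, if_neg hadj, add_zero]
  simp only [reception, sum_filter, Nat.cast_ofNat, term, sum_add_distrib, sum_ite_eq,
    sum_boole]

open Classical in
lemma isBroadcastDominating_two_two_iff {V : Type*} (G : SimpleGraph V) (S : Finset V) :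
    IsBroadcastDominating G 2 2 S ↔ ∀ u ∉ S, 2 ≤ #{v ∈ S | G.Adj u v} := by
  refine forall_congr' fun u => ?_
  by_cases hu : u ∈ S <;> simp [reception_two, hu]

lemma broadcastDomNum_eq_card {V : Type*} [Fintype V] {G : SimpleGraph V} {t r : ℕ}
    {S : Finset V} (hS : IsBroadcastDominating G t r S)
    (hmin : ∀ T, IsBroadcastDominating G t r T → #S ≤ #T) :
    broadcastDomNum G t r = #S :=
  le_antisymm (Nat.sInf_le ⟨S, hS, rfl⟩)
    (le_csInf ⟨_, S, hS, rfl⟩ fun _ ⟨T, hT, hk⟩ => hk ▸ hmin T hT)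

lemma gridGraph_adj_iff {m n : ℕ} {p q : Fin m × Fin n} :
    (gridGraph m n).Adj p q ↔
      p.2 = q.2 ∧ Nat.dist p.1 q.1 = 1 ∨ p.1 = q.1 ∧ Nat.dist p.2 q.2 = 1 := by
  change Nat.dist p.1 q.1 + Nat.dist p.2 q.2 = 1 ↔ _
  simp only [Fin.ext_iff, Nat.dist]
  omega

lemma card_fin_filter_dist_eq_one {n : ℕ} (g : ℕ → Prop) [DecidablePred g] (h0 : ¬g 0)
    (hn : ¬g (n + 1)) (x : Fin n) :
    #{x' : Fin n | Nat.dist x x' = 1 ∧ g (x' + 1)} =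
      (if g x then 1 else 0) + (if g (x + 2 : ℕ) then 1 else 0) := by
  have hpair :
      {j ∈ range (n + 2) | Nat.dist (x + 1 : ℕ) j = 1} = {(x : ℕ), (x + 2 : ℕ)} := by
    ext j; rw [mem_filter, mem_range, Nat.dist]; simp only [mem_insert, mem_singleton]; omega
  let h : ℕ → ℕ := fun j => if Nat.dist (x + 1 : ℕ) j = 1 then (if g j then 1 else 0) else 0
  calc #{x' : Fin n | Nat.dist x x' = 1 ∧ g (x' + 1)}
      = ∑ j ∈ range n, h (j + 1) := by
        rw [card_filter, ← Fin.sum_univ_eq_sum_range (fun j => h (j + 1))]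
        simp only [h, Nat.dist_add_add_right, ite_and]
    _ = ∑ j ∈ range (n + 2), h j := by
        rw [sum_range_succ, sum_range_succ']
        simp [h, h0, hn]
    _ = _ := by
        rw [← sum_filter, hpair, sum_pair (by omega)]

abbrev Column := Finset (Fin 4)

/-- Column `x` of the grid is `f (x + 1)`; `f 0` and `f (n + 1)` are the empty columns
bordering it. -/
def gridSet (n : ℕ) (f : ℕ → Column) : Finset (Fin 4 × Fin n) := {v | v.1 ∈ f (v.2 + 1)}

lemma card_gridSet (n : ℕ) (f : ℕ → Column) :
    #(gridSet n f) = ∑ j ∈ range n, #(f (j + 1)) := by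
  rw [gridSet, card_filter, Fintype.sum_prod_type_right,
    ← Fin.sum_univ_eq_sum_range (fun j => #(f (j + 1)))]
  simp only [← card_filter, filter_mem_eq_inter, univ_inter]

lemma exists_gridSet_eq {n : ℕ} (S : Finset (Fin 4 × Fin n)) :
    ∃ f : ℕ → Column, f 0 = ∅ ∧ f (n + 1) = ∅ ∧ gridSet n f = S := by
  refine ⟨fun j => ({i | ∃ x : Fin n, x + 1 = j ∧ (i, x) ∈ S} : Finset (Fin 4)),
    ?_, ?_, ?_⟩
  · ext; simp
  · ext; simpa using fun x hx => absurd hx x.isLt.ne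
  · ext ⟨i, x⟩; simp [gridSet, Fin.val_inj]

open Classical in
lemma card_adj_gridSet {n : ℕ} {f : ℕ → Column} (h0 : f 0 = ∅) (hn : f (n + 1) = ∅)
    (i : Fin 4) (x : Fin n) :
    #{v ∈ gridSet n f | (gridGraph 4 n).Adj (i, x) v} =
      (if i ∈ f x then 1 else 0) + (if i ∈ f (x + 2 : ℕ) then 1 else 0) +
        #{i' ∈ f (x + 1) | Nat.dist i i'.val = 1} := by
  have hsplit : {v ∈ gridSet n f | (gridGraph 4 n).Adj (i, x) v} =
      {v ∈ gridSet n f | x = v.2 ∧ Nat.dist i v.1 = 1} ∪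
        {v ∈ gridSet n f | i = v.1 ∧ Nat.dist x v.2 = 1} := by
    rw [← filter_or]; simp only [gridGraph_adj_iff]
  have hdisj : Disjoint {v ∈ gridSet n f | x = v.2 ∧ Nat.dist i v.1 = 1}
      {v ∈ gridSet n f | i = v.1 ∧ Nat.dist x v.2 = 1} := by
    refine disjoint_filter.2 fun v _ h h' => ?_
    simp [← h'.1] at h
  have hvert : {v ∈ gridSet n f | x = v.2 ∧ Nat.dist i v.1 = 1} =
      image (·, x) {i' ∈ f (x + 1) | Nat.dist i i'.val = 1} := by
    ext ⟨i', x'⟩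
    simp only [gridSet, mem_filter, mem_univ, true_and, mem_image, Prod.mk.injEq]
    constructor
    · rintro ⟨hi', rfl, hd⟩; exact ⟨i', ⟨hi', hd⟩, rfl, rfl⟩
    · rintro ⟨_, ⟨hi', hd⟩, rfl, rfl⟩; exact ⟨hi', rfl, hd⟩
  have hhor : {v ∈ gridSet n f | i = v.1 ∧ Nat.dist x v.2 = 1} =
      image (i, ·) {x' : Fin n | Nat.dist x x' = 1 ∧ i ∈ f (x' + 1)} := by
    ext ⟨i', x'⟩
    simp only [gridSet, mem_filter, mem_univ, true_and, mem_image, Prod.mk.injEq]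
    constructor
    · rintro ⟨hx', rfl, hd⟩; exact ⟨x', ⟨hd, hx'⟩, rfl, rfl⟩
    · rintro ⟨_, ⟨hd, hx'⟩, rfl, rfl⟩; exact ⟨hx', rfl, hd⟩
  rw [hsplit, card_union_of_disjoint hdisj, hvert, hhor,
    card_image_of_injective _ (Prod.mk_left_injective x),
    card_image_of_injective _ (Prod.mk_right_injective i),
    card_fin_filter_dist_eq_one (i ∈ f ·) (by simp [h0]) (by simp [hn])]
  ring

namespace Column

def Covers (a b c : Column) : Prop :=
  ∀ i ∉ b, 2 ≤ (if i ∈ a then 1 else 0) + (if i ∈ c then 1 else 0) +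
    #{i' ∈ b | Nat.dist i i'.val = 1}

instance (a b c : Column) : Decidable (Covers a b c) := by
  unfold Covers; infer_instance

open Classical in
lemma isBroadcastDominating_gridSet_iff {n : ℕ} {f : ℕ → Column} (h0 : f 0 = ∅)
    (hn : f (n + 1) = ∅) :
    IsBroadcastDominating (gridGraph 4 n) 2 2 (gridSet n f) ↔
      ∀ j < n, Covers (f j) (f (j + 1)) (f (j + 2)) := by
  rw [isBroadcastDominating_two_two_iff]
  constructor
  · intro h j hj i hi
    have := h (i, ⟨j, hj⟩) (by simpa [gridSet] using hi)
    rwa [card_adj_gridSet h0 hn] at this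
  · rintro h ⟨i, x⟩ hi
    rw [card_adj_gridSet h0 hn]
    exact h x x.isLt i (by simpa [gridSet] using hi)

/-- The least total size of columns `b = f 1, …, f (k + 1)` that follow `a = f 0`, are followed by
`f (k + 2) = ∅`, and are all covered by their neighbours. -/
noncomputable def minCost : ℕ → Column → Column → ℕ∞
  | 0, a, b => if Covers a b ∅ then #b else ⊤
  | k + 1, a, b => #b + univ.inf fun c => if Covers a b c then minCost k b c else ⊤

lemma minCost_le_sum (k : ℕ) (f : ℕ → Column) (hlast : f (k + 2) = ∅)
    (hf : ∀ j < k + 1, Covers (f j) (f (j + 1)) (f (j + 2))) :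
    minCost k (f 0) (f 1) ≤ ∑ j ∈ range (k + 1), #(f (j + 1)) := by
  induction k generalizing f with
  | zero => simp [minCost, ← hlast, hf 0 one_pos]
  | succ k ih =>
    have hc : (univ.inf fun c => if Covers (f 0) (f 1) c then minCost k (f 1) c else ⊤) ≤
        minCost k (f 1) (f 2) :=
      (inf_le (mem_univ _)).trans_eq (if_pos (hf 0 (by omega)))
    have htail := ih (fun j => f (j + 1)) hlast fun j hj => hf (j + 1) (by omega)
    calc minCost (k + 1) (f 0) (f 1)
        ≤ #(f 1) + ((∑ j ∈ range (k + 1), #(f (j + 2)) : ℕ) : ℕ∞) := by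
          rw [minCost]; gcongr; exact hc.trans htail
      _ = ∑ j ∈ range (k + 2), #(f (j + 1)) := by
          rw [sum_range_succ' _ (k + 1), add_comm, Nat.cast_add]

lemma exists_sum_eq_minCost (k : ℕ) (a b : Column) (h : minCost k a b ≠ ⊤) :
    ∃ f : ℕ → Column, f 0 = a ∧ f 1 = b ∧ f (k + 2) = ∅ ∧
      (∀ j < k + 1, Covers (f j) (f (j + 1)) (f (j + 2))) ∧
      minCost k a b = ∑ j ∈ range (k + 1), #(f (j + 1)) := by
  induction k generalizing a b with
  | zero =>
    have hab : Covers a b ∅ := by by_contra hab; simp [minCost, hab] at h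
    refine ⟨fun j => if j = 0 then a else if j = 1 then b else ∅, rfl, rfl, rfl, ?_, ?_⟩
    · intro j hj; obtain rfl : j = 0 := by omega
      exact hab
    · simp [minCost, hab]
  | succ k ih =>
    obtain ⟨c, -, hc⟩ := exists_mem_eq_inf univ univ_nonempty
      fun c => if Covers a b c then minCost k b c else ⊤
    have hne : (univ.inf fun c => if Covers a b c then minCost k b c else ⊤) ≠ ⊤ := by
      intro htop; simp [minCost, htop] at h
    rw [hc] at hne
    have habc : Covers a b c := by by_contra habc; simp [habc] at hne
    rw [if_pos habc] at hc hne
    obtain ⟨g, hg0, hg1, hglast, hg, hgsum⟩ := ih b c hne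
    refine ⟨fun j => if j = 0 then a else g (j - 1), rfl, by simpa using hg0,
      by simpa using hglast, ?_, ?_⟩
    · rintro (_ | j) hj
      · simpa [hg0, hg1] using habc
      · simpa using hg j (by omega)
    · rw [minCost, hc, hgsum, sum_range_succ' _ (k + 1)]
      simp [hg0, add_comm]

noncomputable def optimalCost (k : ℕ) : ℕ∞ := univ.inf (minCost k ∅)

lemma minCost_seven : ∀ a b, minCost 7 a b = 7 + minCost 3 a b := by
  decide +kernel

lemma minCost_add_four {k : ℕ} (hk : 3 ≤ k) (a b : Column) :
    minCost (k + 4) a b = 7 + minCost k a b := by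
  induction k, hk using Nat.le_induction generalizing a b with
  | base => exact minCost_seven a b
  | succ k _ ih =>
    have shift (c : Column) : (if Covers a b c then minCost (k + 4) b c else ⊤) =
        7 + if Covers a b c then minCost k b c else ⊤ := by
      split_ifs
      · exact ih b c
      · rfl
    rw [show k + 1 + 4 = k + 4 + 1 from rfl, minCost, minCost]
    simp only [shift, inf_univ_eq_iInf, ← ENat.add_iInf]
    exact add_left_comm _ _ _

lemma optimalCost_add_four {k : ℕ} (hk : 3 ≤ k) : optimalCost (k + 4) = 7 + optimalCost k := by
  rw [optimalCost, optimalCost, funext (minCost_add_four hk ∅), inf_univ_eq_iInf,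
    inf_univ_eq_iInf, ENat.add_iInf]

lemma optimalCost_add_div_four {k : ℕ} (hk : 3 ≤ k) :
    optimalCost k + ((k - 2) / 4 : ℕ) = 2 * (k + 1) := by
  induction k using Nat.strong_induction_on with
  | _ k ih =>
    obtain hk7 | hk7 := lt_or_ge k 7
    · interval_cases k <;> decide +kernel
    · obtain ⟨m, rfl⟩ : ∃ m, k = m + 4 := ⟨k - 4, by omega⟩
      calc optimalCost (m + 4) + ((m + 4 - 2) / 4 : ℕ)
          = (optimalCost m + ((m - 2) / 4 : ℕ)) + 8 := by
            rw [optimalCost_add_four (by omega), show (m + 4 - 2) / 4 = (m - 2) / 4 + 1 by omega]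
            push_cast; ring
        _ = 2 * ((m + 4 : ℕ) + 1) := by
            rw [ih m (by omega) (by omega)]; push_cast; ring

end Column

open Column

lemma broadcastDomNum_gridGraph_four (k : ℕ) :
    (broadcastDomNum (gridGraph 4 (k + 1)) 2 2 : ℕ∞) = optimalCost k := by
  have optimalCost_le (S : Finset (Fin 4 × Fin (k + 1)))
      (hS : IsBroadcastDominating (gridGraph 4 (k + 1)) 2 2 S) : optimalCost k ≤ #S := by
    obtain ⟨f, h0, hlast, rfl⟩ := exists_gridSet_eq S
    rw [isBroadcastDominating_gridSet_iff h0 hlast] at hS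
    calc optimalCost k ≤ minCost k (f 0) (f 1) := h0 ▸ inf_le (mem_univ _)
      _ ≤ _ := minCost_le_sum k f hlast hS
      _ = #(gridSet (k + 1) f) := by rw [card_gridSet]
  have hne : optimalCost k ≠ ⊤ :=
    ne_top_of_le_ne_top (ENat.natCast_ne_top _)
      (optimalCost_le univ (by simp [isBroadcastDominating_two_two_iff]))
  obtain ⟨b, -, hb⟩ : ∃ b ∈ univ, optimalCost k = minCost k ∅ b :=
    exists_mem_eq_inf univ univ_nonempty _
  obtain ⟨f, h0, rfl, hlast, hf, hsum⟩ := exists_sum_eq_minCost k ∅ b (hb ▸ hne)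
  have hS := (isBroadcastDominating_gridSet_iff h0 hlast).2 hf
  have hcard : (#(gridSet (k + 1) f) : ℕ∞) = optimalCost k := by
    rw [card_gridSet, hb, hsum]
  rw [broadcastDomNum_eq_card hS fun T hT => by
    exact_mod_cast hcard.trans_le (optimalCost_le T hT), hcard]

theorem stmt1 (n : ℕ) (hn : 4 ≤ n) :
    (broadcastDomNum (gridGraph 4 n) 2 2 : ℤ) = 2 * n - ⌈((n : ℚ) - 6) / 4⌉ := by
  obtain ⟨k, rfl⟩ : ∃ k, n = k + 1 := ⟨n - 1, by omega⟩
  have hval : broadcastDomNum (gridGraph 4 (k + 1)) 2 2 + (k - 2) / 4 = 2 * (k + 1) := by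
    have := optimalCost_add_div_four (k := k) (by omega)
    rw [← broadcastDomNum_gridGraph_four] at this
    exact_mod_cast this
  have hceil : ⌈(((k + 1 : ℕ) : ℚ) - 6) / 4⌉ = -(-(k - 5 : ℤ) / (4 : ℕ)) := by
    rw [← Rat.ceil_intCast_div_natCast]; push_cast; ring_nf
  rw [hceil]
  omega
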